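/- arXiv:1311.7289 — 3 statements merged into one kernel-verified Lean document; each statement's English description precedes it below -/
import Mathlib

section
/- Let P be an abstract simplex path of dimension n and length k ≥ 3, and let (m, D, Q) be vertex expansion data for P, where Q = (q_1,...,q_t) is an [n]-cube loop with q_1 = C_{m-1} and q_t = C_m. Then the vertex expansion P(m,D,Q) is a well-defined abstract simplex path of dimension n and length k + t − 2. -/
/-- Data of an abstract simplex path of dimension `n`: the vertices (colors) of the
`n`-simplex are indexed by `Fin (n+1)`; `C` and `V` are indexed by positive naturals
(positions `1,…,k-1` are the relevant ones for a path of length `k`). -/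
structure SPath (n : ℕ) where
  I : Fin (n + 1) → Bool
  C : ℕ → Fin (n + 1)
  V : ℕ → Bool

namespace SPath

variable {n : ℕ}

/-- The `j`-th simplex `R^j(P)` of the path, defined via the last-occurrence rule. -/
def R (P : SPath n) (j : ℕ) (i : Fin (n + 1)) : Bool :=
  if h : ((Finset.Icc 1 (j - 1)).filter fun m => P.C m = i).Nonempty then
    P.V (((Finset.Icc 1 (j - 1)).filter fun m => P.C m = i).max' h)
  else P.I i

/-- The height `h_j(P)` of the `j`-th simplex: the number of `1`-entries. -/
def height (P : SPath n) (j : ℕ) : ℕ :=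
  (Finset.univ.filter fun i : Fin (n + 1) => P.R j i = true).card

/-- The no-back-flip condition for a path of length `k`. -/
def NoBackFlip (P : SPath n) (k : ℕ) : Prop :=
  ∀ i, 1 ≤ i → i + 1 ≤ k - 1 → P.C i ≠ P.C (i + 1)

/-- A boolean `[n]`-tuple is monochromatic. -/
def Mono (f : Fin (n + 1) → Bool) : Prop := ∃ b, ∀ i, f i = b

/-- `P` is an atomic path of length `k`. -/
def Atomic (P : SPath n) (k : ℕ) : Prop :=
  NoBackFlip P k ∧ Even k ∧ 2 ≤ k ∧
    (∀ i, P.R 1 i = false) ∧ (∀ i, P.R k i = false) ∧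
    ∀ j, 1 < j → j < k → ¬Mono (P.R j)

/-- The subpath of `P` starting at position `a` (the subpath `P[a,b]` has length `b+1-a`). -/
def sub (P : SPath n) (a : ℕ) : SPath n :=
  ⟨fun i => P.R a i, fun m => P.C (a - 1 + m), fun m => P.V (a - 1 + m)⟩

/-- `P` (of length `k`) is admissible: a concatenation of atomic paths. -/
def Admissible (P : SPath n) (k : ℕ) : Prop :=
  ∃ (r : ℕ) (a : ℕ → ℕ), 1 ≤ r ∧ a 0 = 0 ∧ a r = k ∧
    (∀ s, s < r → a s < a (s + 1)) ∧
    ∀ s, s < r → Atomic (P.sub (a s + 1)) (a (s + 1) - a s)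

/-- A `0`-path of length `k`: zero initial simplex and all `V`-values `0`. -/
def IsZeroPath (P : SPath n) (k : ℕ) : Prop :=
  (∀ i, P.I i = false) ∧ ∀ j, 1 ≤ j → j + 1 ≤ k → P.V j = false

end SPath

/-- Number of occurrences of `l` among `(Q a, …, Q b)`. -/
def cnt {n : ℕ} (Q : ℕ → Fin (n + 1)) (a b : ℕ) (l : Fin (n + 1)) : ℕ :=
  ((Finset.Icc a b).filter fun m => Q m = l).card

/-- The tuple `(Q 1, …, Q t)` describes an `[n]`-cube loop. -/
def IsCubeLoop {n : ℕ} (Q : ℕ → Fin (n + 1)) (t : ℕ) : Prop :=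
  1 ≤ t ∧ (∀ l, Even (cnt Q 1 t l)) ∧
    ∀ i j, 1 ≤ i → i < j → j ≤ t → (i, j) ≠ (1, t) → ∃ l, ¬Even (cnt Q i j l)

/-- The tuple `(Q 1, …, Q t)` together with the split `s` describes an `[n]`-cube `p`-path. -/
def IsCubePath {n : ℕ} (p : Fin (n + 1)) (Q : ℕ → Fin (n + 1)) (t s : ℕ) : Prop :=
  1 ≤ s ∧ s < t ∧ (∀ m, 1 ≤ m → m ≤ t → Q m ≠ p) ∧
    (∀ l, l ≠ p → Even (cnt Q 1 t l)) ∧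
    (∀ i j, 1 ≤ i → i < j → j ≤ s → ∃ l, ¬Even (cnt Q i j l)) ∧
    ∀ i j, s + 1 ≤ i → i < j → j ≤ t → ∃ l, ¬Even (cnt Q i j l)

namespace SPath

variable {n : ℕ}

/-- The labels `w_i` used in the vertex and edge expansions. -/
def w (P : SPath n) (m : ℕ) (D : Fin (n + 1) → Bool) (Q : ℕ → Fin (n + 1)) (i : ℕ) : Bool :=
  if Even (cnt Q 1 i (Q i)) then P.R m (Q i) else D (Q i)

/-- The vertex expansion `P(m, D, Q)` for a cube loop `Q` of length `t`. -/
def vexp (P : SPath n) (m : ℕ) (D : Fin (n + 1) → Bool) (Q : ℕ → Fin (n + 1)) (t : ℕ) :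
    SPath n where
  I := P.I
  C := fun j =>
    if j ≤ m - 1 then P.C j
    else if j ≤ m + t - 3 then Q (j + 2 - m)
    else P.C (j + 2 - t)
  V := fun j =>
    if j ≤ m - 2 then P.V j
    else if j ≤ m + t - 3 then P.w m D Q (j + 2 - m)
    else P.V (j + 2 - t)

/-- The edge expansion `P(m, D, Q, s)` for a cube path `Q` of length `t` with split `s`. -/
def eexp (P : SPath n) (m : ℕ) (D : Fin (n + 1) → Bool) (Q : ℕ → Fin (n + 1)) (t s : ℕ) :
    SPath n where
  I := P.I
  C := fun j =>
    if j ≤ m - 1 then P.C j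
    else if j ≤ m + s - 2 then Q (j + 2 - m)
    else if j = m + s - 1 then P.C m
    else if j ≤ m + t - 2 then Q (j + 1 - m)
    else P.C (j + 2 - t)
  V := fun j =>
    if j ≤ m - 2 then P.V j
    else if j ≤ m + s - 2 then P.w m D Q (j + 2 - m)
    else if j = m + s - 1 then P.V m
    else if j ≤ m + t - 2 then P.w m D Q (j + 1 - m)
    else P.V (j + 2 - t)

/-- Two cube vertices differ in exactly one coordinate. -/
def Adjacent (α β : Fin (n + 1) → Bool) : Prop := ∃! l, α l ≠ β l

/-- Membership in `M(A)` for the `2 × (n+1)` array with rows `A0` and `A1`. -/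
def MemMA (A0 A1 : Fin (n + 1) → Bool) (α : Fin (n + 1) → Bool) : Prop :=
  ∃ b, ∀ l, (if α l then A1 l else A0 l) = b

/-- The vertex expansion with data `(m, D, Q)` (loop length `t`) is exhaustive. -/
def ExhVertex (P : SPath n) (m t : ℕ) (D : Fin (n + 1) → Bool) (Q : ℕ → Fin (n + 1)) : Prop :=
  ∃ f : (Fin (n + 1) → Bool) → Fin (n + 1) → Bool,
    ∀ α, MemMA (P.R m) D α →
      (f α ≠ α → MemMA (P.R m) D (f α) ∧ f (f α) = α ∧ Adjacent α (f α)) ∧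
      (f α = α → ∃ i, 1 ≤ i ∧ i ≤ t - 1 ∧
        ∀ j, α j = true ↔ ¬Even (cnt Q 1 i j))

/-- The edge expansion with data `(m, D, Q, s)` (length `t`) is exhaustive. -/
def ExhEdge (P : SPath n) (m t s : ℕ) (D : Fin (n + 1) → Bool) (Q : ℕ → Fin (n + 1)) : Prop :=
  ∃ f : (Fin (n + 1) → Bool) → Fin (n + 1) → Bool,
    ∀ α, MemMA (P.R m) (fun l => if l = P.C m then P.V m else D l) α →
      (f α ≠ α →
        MemMA (P.R m) (fun l => if l = P.C m then P.V m else D l) (f α) ∧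
          f (f α) = α ∧ Adjacent α (f α)) ∧
      (f α = α → ∃ i,
        ((α (P.C m) = false ∧ 1 ≤ i ∧ i ≤ s) ∨ (α (P.C m) = true ∧ s + 1 ≤ i ∧ i ≤ t)) ∧
        ∀ j, j ≠ P.C m → (α j = true ↔ ¬Even (cnt Q 1 i j)))

/-- `(P', k')` is obtained from `(P, k)` by a finite sequence of exhaustive
vertex and edge expansions. -/
inductive Reduces : SPath n → ℕ → SPath n → ℕ → Prop where
  | refl (P : SPath n) (k : ℕ) : Reduces P k P k
  | vstep (P : SPath n) (k m t : ℕ) (D : Fin (n + 1) → Bool) (Q : ℕ → Fin (n + 1))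
      (P' : SPath n) (k' : ℕ) :
      2 ≤ m → m + 1 ≤ k → IsCubeLoop Q t → Q 1 = P.C (m - 1) → Q t = P.C m →
      ExhVertex P m t D Q →
      Reduces (P.vexp m D Q t) (k + t - 2) P' k' → Reduces P k P' k'
  | estep (P : SPath n) (k m t s : ℕ) (D : Fin (n + 1) → Bool) (Q : ℕ → Fin (n + 1))
      (P' : SPath n) (k' : ℕ) :
      2 ≤ m → m + 2 ≤ k → IsCubePath (P.C m) Q t s → Q 1 = P.C (m - 1) → Q t = P.C (m + 1) →
      ExhEdge P m t s D Q →
      Reduces (P.eexp m D Q t s) (k + t - 2) P' k' → Reduces P k P' k'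

/-- `P` is reducible: some finite sequence of exhaustive vertex and edge
expansions transforms it into a `0`-path. -/
def Reducible (P : SPath n) (k : ℕ) : Prop :=
  ∃ P' k', Reduces P k P' k' ∧ IsZeroPath P' k'

end SPath


/-- the vertex expansion `P(m, D, Q)` of an abstract simplex path of
dimension `n` and length `k` is a well-defined abstract simplex path of dimension `n`
and length `k + t - 2` (its color tuple has no two equal consecutive entries). -/
theorem vexp_wellDefined (n k : ℕ) (P : SPath n) (hP : P.NoBackFlip k) (hk : 3 ≤ k)
    (m t : ℕ) (hm : 2 ≤ m) (hmk : m + 1 ≤ k)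
    (D : Fin (n + 1) → Bool) (Q : ℕ → Fin (n + 1))
    (hQ : IsCubeLoop Q t) (hq1 : Q 1 = P.C (m - 1)) (hqt : Q t = P.C m) :
    (P.vexp m D Q t).NoBackFlip (k + t - 2) := by
  obtain ⟨ht1, heven, hodd⟩ := hQ
  have hC : P.C (m - 1) ≠ P.C m := by
    have h := hP (m - 1) (by omega) (by omega)
    rwa [show m - 1 + 1 = m by omega] at h
  have hQ1t : Q 1 ≠ Q t := by rw [hq1, hqt]; exact hC
  have ht2 : 2 ≤ t := by
    rcases Nat.lt_or_ge t 2 with h | h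
    · have : t = 1 := by omega
      exact absurd (by rw [this]) hQ1t
    · exact h
  have hQadj : ∀ j, 1 ≤ j → j + 1 ≤ t → Q j ≠ Q (j + 1) := by
    intro j hj hjt hEq
    by_cases hcase : ((j : ℕ), j + 1) = (1, t)
    · have h1 : j = 1 := by
        have := congrArg Prod.fst hcase; simpa using this
      have h2 : j + 1 = t := by
        have := congrArg Prod.snd hcase; simpa using this
      apply hQ1t
      rw [h2] at hEq
      rw [h1] at hEq
      exact hEq
    · obtain ⟨l, hl⟩ := hodd j (j + 1) hj (by omega) hjt hcase
      apply hl
      have hIcc : Finset.Icc j (j + 1) = {j, j + 1} := by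
        ext x; simp [Finset.mem_Icc]; omega
      have hcard : cnt Q j (j + 1) l = if Q j = l then 2 else 0 := by
        unfold cnt
        rw [hIcc]
        rcases eq_or_ne (Q j) l with h | h
        · rw [if_pos h]
          rw [Finset.filter_eq_self.mpr]
          · rw [Finset.card_insert_of_notMem (by simp), Finset.card_singleton]
          · intro x hx
            simp only [Finset.mem_insert, Finset.mem_singleton] at hx
            rcases hx with rfl | rfl
            · exact h
            · rw [← hEq]; exact h
        · rw [if_neg h]
          rw [Finset.card_eq_zero, Finset.filter_eq_empty_iff]
          intro x hx
          simp only [Finset.mem_insert, Finset.mem_singleton] at hx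
          rcases hx with rfl | rfl
          · exact h
          · rw [← hEq]; exact h
      rw [hcard]
      split <;> simp
  intro i hi hik
  simp only [SPath.vexp, SPath.NoBackFlip] at *
  split_ifs with h1 h3 h4 h4' h3' h4'' h4'''
  · -- i ≤ m-1, i+1 ≤ m-1
    exact hP i hi (by omega)
  · -- i ≤ m-1, ¬(i+1 ≤ m-1), i+1 ≤ m+t-3 : i = m-1, Q 2
    have hieq : i = m - 1 := by omega
    rw [hieq, show m - 1 + 1 + 2 - m = 2 by omega]
    have := hQadj 1 le_rfl (by omega)
    rw [hq1] at this
    exact this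
  · -- i ≤ m-1, else else : i = m-1, t = 2
    have hieq : i = m - 1 := by omega
    have ht : t = 2 := by omega
    rw [hieq, show m - 1 + 1 + 2 - t = m by omega]
    exact hC
  · omega
  · -- ¬h1, i ≤ m+t-3, i+1 ≤ m+t-3 : both Q
    have hidx : i + 1 + 2 - m = (i + 2 - m) + 1 := by omega
    rw [hidx]
    exact hQadj (i + 2 - m) (by omega) (by omega)
  · -- ¬h1, i ≤ m+t-3, ¬(i+1 ≤ m+t-3) : i = m+t-3, Q(t-1) vs P.C m
    have hidx1 : i + 2 - m = t - 1 := by omega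
    have hidx2 : i + 1 + 2 - t = m := by omega
    rw [hidx1, hidx2, ← hqt]
    have := hQadj (t - 1) (by omega) (by omega)
    rwa [show t - 1 + 1 = t by omega] at this
  · omega
  · omega
  · -- both last branch
    have hidx : i + 1 + 2 - t = (i + 2 - t) + 1 := by omega
    rw [hidx]
    exact hP (i + 2 - t) (by omega) (by omega)
end

section
/- In a vertex expansion P̃ = P(m,D,Q) with loop Q = (q_1,...,q_t), the new simplices inside the expanded region are given by the array A: for m ≤ j ≤ m+t−2, the simplex R^j(P̃) equals A(α) where α : {0,...,n} → {0,1} is defined by α(l) = (number of occurrences of l in (q_1,...,q_{j-m+1})) mod 2, A(α)_l = R^m(P)_l if α(l) = 0, and A(α)_l = D_l if α(l) = 1. -/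
private lemma vexp_C_lo {n : ℕ} (P : SPath n) (m t : ℕ) (D : Fin (n + 1) → Bool)
    (Q : ℕ → Fin (n + 1)) (p : ℕ) (hp : p ≤ m - 1) :
    (P.vexp m D Q t).C p = P.C p := by
  simp only [SPath.vexp, if_pos hp]

private lemma vexp_C_mid {n : ℕ} (P : SPath n) (m t : ℕ) (D : Fin (n + 1) → Bool)
    (Q : ℕ → Fin (n + 1)) (p : ℕ) (h1 : ¬ p ≤ m - 1) (h2 : p ≤ m + t - 3) :
    (P.vexp m D Q t).C p = Q (p + 2 - m) := by
  simp only [SPath.vexp, if_neg h1, if_pos h2]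

private lemma vexp_V_lo {n : ℕ} (P : SPath n) (m t : ℕ) (D : Fin (n + 1) → Bool)
    (Q : ℕ → Fin (n + 1)) (p : ℕ) (hp : p ≤ m - 2) :
    (P.vexp m D Q t).V p = P.V p := by
  simp only [SPath.vexp, if_pos hp]

private lemma vexp_V_mid {n : ℕ} (P : SPath n) (m t : ℕ) (D : Fin (n + 1) → Bool)
    (Q : ℕ → Fin (n + 1)) (p : ℕ) (h1 : ¬ p ≤ m - 2) (h2 : p ≤ m + t - 3) :
    (P.vexp m D Q t).V p = P.w m D Q (p + 2 - m) := by
  simp only [SPath.vexp, if_neg h1, if_pos h2]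

private lemma R_eq_of_max {n : ℕ} (P : SPath n) (j : ℕ) (l : Fin (n + 1))
    (h : ((Finset.Icc 1 (j - 1)).filter fun m => P.C m = l).Nonempty) :
    P.R j l = P.V (((Finset.Icc 1 (j - 1)).filter fun m => P.C m = l).max' h) := by
  rw [SPath.R, dif_pos h]

private lemma R_eq_of_empty {n : ℕ} (P : SPath n) (j : ℕ) (l : Fin (n + 1))
    (h : ¬ ((Finset.Icc 1 (j - 1)).filter fun m => P.C m = l).Nonempty) :
    P.R j l = P.I l := by
  rw [SPath.R, dif_neg h]

/-- inside the expanded region, the simplices of the vertex expansion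
are given by the array `A`: for `m ≤ j ≤ m + t - 2`, the `l`-th coordinate of
`R^j(P~)` is `R^m(P) l` if `l` occurs an even number of times in `(q_1, …, q_{j-m+1})`,
and `D l` if it occurs an odd number of times. -/
theorem vexp_inside (n k : ℕ) (P : SPath n) (hP : P.NoBackFlip k) (hk : 3 ≤ k)
    (m t : ℕ) (hm : 2 ≤ m) (hmk : m + 1 ≤ k)
    (D : Fin (n + 1) → Bool) (Q : ℕ → Fin (n + 1))
    (hQ : IsCubeLoop Q t) (hq1 : Q 1 = P.C (m - 1)) (hqt : Q t = P.C m) :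
    ∀ j, m ≤ j → j ≤ m + t - 2 → ∀ l,
      (P.vexp m D Q t).R j l = if Even (cnt Q 1 (j + 1 - m) l) then P.R m l else D l := by
  intro j hjm hjmt l
  have ht1 := hQ.1
  have ht2 : 2 ≤ t := by omega
  by_cases hA : ∃ i, 2 ≤ i ∧ i ≤ j + 1 - m ∧ Q i = l
  · -- l occurs among q_2, …, q_{j+1-m}; take the last occurrence i
    obtain ⟨i, hi1, hi2, hi3, hi4⟩ : ∃ i, 2 ≤ i ∧ i ≤ j + 1 - m ∧ Q i = l ∧
        ∀ i', i < i' → i' ≤ j + 1 - m → Q i' ≠ l := by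
      obtain ⟨i0, h1, h2, h3⟩ := hA
      have hTne : ((Finset.Icc 2 (j + 1 - m)).filter (fun i => Q i = l)).Nonempty :=
        ⟨i0, by simp only [Finset.mem_filter, Finset.mem_Icc]; exact ⟨⟨h1, h2⟩, h3⟩⟩
      have hmem := Finset.max'_mem _ hTne
      simp only [Finset.mem_filter, Finset.mem_Icc] at hmem
      refine ⟨_, hmem.1.1, hmem.1.2, hmem.2, ?_⟩
      intro i' hlt hle hQl
      have hle' : i' ≤ ((Finset.Icc 2 (j + 1 - m)).filter (fun i => Q i = l)).max' hTne := by
        apply Finset.le_max'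
        simp only [Finset.mem_filter, Finset.mem_Icc]
        exact ⟨⟨by omega, hle⟩, hQl⟩
      omega
    have hpS : i + m - 2 ∈ (Finset.Icc 1 (j - 1)).filter
        (fun p => (P.vexp m D Q t).C p = l) := by
      simp only [Finset.mem_filter, Finset.mem_Icc]
      refine ⟨⟨by omega, by omega⟩, ?_⟩
      rw [vexp_C_mid P m t D Q _ (by omega) (by omega)]
      have h2 : i + m - 2 + 2 - m = i := by omega
      rw [h2]; exact hi3
    have hSne : ((Finset.Icc 1 (j - 1)).filter
        (fun p => (P.vexp m D Q t).C p = l)).Nonempty := ⟨_, hpS⟩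
    have hmax : ((Finset.Icc 1 (j - 1)).filter
        (fun p => (P.vexp m D Q t).C p = l)).max' hSne = i + m - 2 := by
      refine le_antisymm (Finset.max'_le _ _ _ ?_) (Finset.le_max' _ _ hpS)
      intro p hp
      by_contra hc
      push_neg at hc
      simp only [Finset.mem_filter, Finset.mem_Icc] at hp
      have hC : (P.vexp m D Q t).C p = Q (p + 2 - m) :=
        vexp_C_mid P m t D Q p (by omega) (by omega)
      exact hi4 (p + 2 - m) (by omega) (by omega) (hC ▸ hp.2)
    have hcnt : cnt Q 1 (j + 1 - m) l = cnt Q 1 i l := by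
      unfold cnt
      congr 1
      apply Finset.ext
      intro p
      simp only [Finset.mem_filter, Finset.mem_Icc]
      constructor
      · rintro ⟨⟨h1, h2⟩, h3⟩
        refine ⟨⟨h1, ?_⟩, h3⟩
        by_contra hc
        push_neg at hc
        exact hi4 p hc h2 h3
      · rintro ⟨⟨h1, h2⟩, h3⟩
        exact ⟨⟨h1, by omega⟩, h3⟩
    rw [R_eq_of_max _ _ _ hSne, hmax,
      vexp_V_mid P m t D Q _ (by omega) (by omega), hcnt]
    have h2 : i + m - 2 + 2 - m = i := by omega
    rw [h2, SPath.w, hi3]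
  · push_neg at hA
    by_cases hB : Q 1 = l
    · -- first branch: q_1 = l, last occurrence at position m - 1
      have hpS : m - 1 ∈ (Finset.Icc 1 (j - 1)).filter
          (fun p => (P.vexp m D Q t).C p = l) := by
        simp only [Finset.mem_filter, Finset.mem_Icc]
        refine ⟨⟨by omega, by omega⟩, ?_⟩
        rw [vexp_C_lo P m t D Q _ (le_refl _), ← hq1]; exact hB
      have hSne : ((Finset.Icc 1 (j - 1)).filter
          (fun p => (P.vexp m D Q t).C p = l)).Nonempty := ⟨_, hpS⟩
      have hmax : ((Finset.Icc 1 (j - 1)).filter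
          (fun p => (P.vexp m D Q t).C p = l)).max' hSne = m - 1 := by
        refine le_antisymm (Finset.max'_le _ _ _ ?_) (Finset.le_max' _ _ hpS)
        intro p hp
        by_contra hc
        push_neg at hc
        simp only [Finset.mem_filter, Finset.mem_Icc] at hp
        have hC : (P.vexp m D Q t).C p = Q (p + 2 - m) :=
          vexp_C_mid P m t D Q p (by omega) (by omega)
        exact hA (p + 2 - m) (by omega) (by omega) (hC ▸ hp.2)
      have hcnt : cnt Q 1 (j + 1 - m) l = 1 := by
        unfold cnt
        have h : (Finset.Icc 1 (j + 1 - m)).filter (fun p => Q p = l) = {1} := by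
          apply Finset.ext
          intro p
          simp only [Finset.mem_filter, Finset.mem_Icc, Finset.mem_singleton]
          constructor
          · rintro ⟨⟨h1, h2⟩, h3⟩
            by_contra hc
            exact hA p (by omega) h2 h3
          · rintro rfl
            exact ⟨⟨le_refl _, by omega⟩, hB⟩
        rw [h, Finset.card_singleton]
      have hcnt1 : cnt Q 1 1 l = 1 := by
        unfold cnt
        rw [Finset.Icc_self, Finset.filter_singleton, if_pos hB, Finset.card_singleton]
      rw [R_eq_of_max _ _ _ hSne, hmax,
        vexp_V_mid P m t D Q _ (by omega) (by omega)]
      have h2 : m - 1 + 2 - m = 1 := by omega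
      rw [h2, SPath.w, hB, hcnt, hcnt1]
    · -- l does not occur among q_1, …, q_{j+1-m}
      have hcnt : cnt Q 1 (j + 1 - m) l = 0 := by
        unfold cnt
        rw [Finset.card_eq_zero, Finset.filter_eq_empty_iff]
        intro p hp
        simp only [Finset.mem_Icc] at hp
        rcases Nat.eq_or_lt_of_le hp.1 with h | h
        · rw [← h]; exact hB
        · exact hA p (by omega) hp.2
      rw [hcnt]
      have hSeq : (Finset.Icc 1 (j - 1)).filter (fun p => (P.vexp m D Q t).C p = l)
          = (Finset.Icc 1 (m - 1)).filter (fun p => P.C p = l) := by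
        apply Finset.ext
        intro p
        simp only [Finset.mem_filter, Finset.mem_Icc]
        constructor
        · rintro ⟨⟨h1, h2⟩, h3⟩
          by_cases hpm : p ≤ m - 1
          · rw [vexp_C_lo P m t D Q p hpm] at h3
            exact ⟨⟨h1, hpm⟩, h3⟩
          · rw [vexp_C_mid P m t D Q p hpm (by omega)] at h3
            exact absurd h3 (hA (p + 2 - m) (by omega) (by omega))
        · rintro ⟨⟨h1, h2⟩, h3⟩
          exact ⟨⟨h1, by omega⟩, by rw [vexp_C_lo P m t D Q p h2]; exact h3⟩
      by_cases hne : ((Finset.Icc 1 (m - 1)).filter (fun p => P.C p = l)).Nonempty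
      · have hSne : ((Finset.Icc 1 (j - 1)).filter
            (fun p => (P.vexp m D Q t).C p = l)).Nonempty := by
          rw [hSeq]; exact hne
        have hmaxle : ((Finset.Icc 1 (m - 1)).filter (fun p => P.C p = l)).max' hne ≤ m - 2 := by
          have hmem := Finset.max'_mem _ hne
          simp only [Finset.mem_filter, Finset.mem_Icc] at hmem
          have hne' : ((Finset.Icc 1 (m - 1)).filter (fun p => P.C p = l)).max' hne ≠ m - 1 := by
            intro hc
            apply hB
            rw [hq1, ← hc]
            exact hmem.2
          have := hmem.1.2
          omega
        have hmaxeq : ((Finset.Icc 1 (j - 1)).filter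
              (fun p => (P.vexp m D Q t).C p = l)).max' hSne
            = ((Finset.Icc 1 (m - 1)).filter (fun p => P.C p = l)).max' hne := by
          apply le_antisymm
          · apply Finset.max'_le
            intro p hp
            apply Finset.le_max'
            rw [← hSeq]; exact hp
          · apply Finset.max'_le
            intro p hp
            apply Finset.le_max'
            rw [hSeq]; exact hp
        rw [R_eq_of_max _ _ _ hSne, hmaxeq, vexp_V_lo P m t D Q _ hmaxle,
          R_eq_of_max P m l hne]
        simp
      · have hSne : ¬ ((Finset.Icc 1 (j - 1)).filter
            (fun p => (P.vexp m D Q t).C p = l)).Nonempty := by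
          rw [hSeq]; exact hne
        rw [R_eq_of_empty _ _ _ hSne, R_eq_of_empty P m l hne]
        simp [SPath.vexp]
end

section
/- Up to the action of the symmetric group on {0,...,n} (permuting colors), there is exactly one atomic abstract simplex path of length 2, namely P with C = (0) and V = (0), and exactly one atomic abstract simplex path of length 4, namely P with C = (0,1,0) and V = (1,0,0). -/
namespace SPath

variable {n : ℕ}

lemma R_one' (P : SPath n) (i : Fin (n + 1)) : P.R 1 i = P.I i := by
  unfold R
  rw [dif_neg]
  simp

lemma R_succ' (P : SPath n) (j : ℕ) (hj : 1 ≤ j) (i : Fin (n + 1)) :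
    P.R (j + 1) i = if P.C j = i then P.V j else P.R j i := by
  unfold R
  have hIcc : Finset.Icc 1 (j + 1 - 1) = insert j (Finset.Icc 1 (j - 1)) := by
    ext m; simp only [Finset.mem_Icc, Finset.mem_insert]; omega
  rw [hIcc]
  by_cases hc : P.C j = i
  · rw [if_pos hc]
    have hmem : j ∈ (insert j (Finset.Icc 1 (j - 1))).filter (fun m => P.C m = i) := by
      simp [hc]
    have hne : ((insert j (Finset.Icc 1 (j - 1))).filter (fun m => P.C m = i)).Nonempty :=
      ⟨j, hmem⟩
    rw [dif_pos hne]
    have hmax : ((insert j (Finset.Icc 1 (j - 1))).filter (fun m => P.C m = i)).max' hne = j := by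
      apply le_antisymm
      · apply Finset.max'_le
        intro y hy
        simp only [Finset.mem_filter, Finset.mem_insert, Finset.mem_Icc] at hy
        omega
      · exact Finset.le_max' _ j hmem
    rw [hmax]
  · rw [if_neg hc]
    have hfe : (insert j (Finset.Icc 1 (j - 1))).filter (fun m => P.C m = i)
        = (Finset.Icc 1 (j - 1)).filter (fun m => P.C m = i) := by
      rw [Finset.filter_insert, if_neg hc]
    rw [hfe]

end SPath

section Helpers

variable {n : ℕ}

lemma fin_zero_ne_one (hn : 1 ≤ n) : (0 : Fin (n + 1)) ≠ 1 := by
  intro h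
  have h1 : ((1 : Fin (n + 1)) : ℕ) = 1 % (n + 1) := rfl
  have h2 : ((0 : Fin (n + 1)) : ℕ) = ((1 : Fin (n + 1)) : ℕ) := congrArg Fin.val h
  have h3 : 1 % (n + 1) = 1 := Nat.mod_eq_of_lt (by omega)
  have h0 : ((0 : Fin (n + 1)) : ℕ) = 0 := rfl
  rw [h0, h1, h3] at h2
  exact one_ne_zero h2.symm

end Helpers

/-- up to the action of the symmetric group on colors, there is exactly
one atomic path of length `2`, namely `C = (0)`, `V = (0)`, and exactly one atomic path
of length `4`, namely `C = (0,1,0)`, `V = (1,0,0)` (for atomic paths `I = 0` is forced,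
so a path is identified with `(C, V)`). -/
theorem atomic_length_two_four (n : ℕ) (hn : 1 ≤ n) :
    (∀ P : SPath n, P.Atomic 2 → ∃ π : Equiv.Perm (Fin (n + 1)),
      π (P.C 1) = 0 ∧ P.V 1 = false) ∧
    (∀ P : SPath n, P.Atomic 4 → ∃ π : Equiv.Perm (Fin (n + 1)),
      π (P.C 1) = 0 ∧ π (P.C 2) = 1 ∧ π (P.C 3) = 0 ∧
      P.V 1 = true ∧ P.V 2 = false ∧ P.V 3 = false) ∧
    SPath.Atomic (⟨fun _ => false, fun _ => 0, fun _ => false⟩ : SPath n) 2 ∧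
    SPath.Atomic
      (⟨fun _ => false, fun m => if m = 2 then 1 else 0,
        fun m => if m = 1 then true else false⟩ : SPath n) 4 := by
  have h01 : (0 : Fin (n + 1)) ≠ 1 := fin_zero_ne_one hn
  refine ⟨?_, ?_, ?_, ?_⟩
  · -- length 2, forward direction
    rintro P ⟨-, -, -, h1, h2, -⟩
    refine ⟨Equiv.swap (P.C 1) 0, Equiv.swap_apply_left _ _, ?_⟩
    have := h2 (P.C 1)
    rw [show (2 : ℕ) = 1 + 1 from rfl, P.R_succ' 1 le_rfl, if_pos rfl] at this
    exact this
  · -- length 4, forward direction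
    rintro P ⟨hnb, -, -, h1, h4, hmono⟩
    have hI : ∀ i, P.I i = false := by
      intro i; have := h1 i; rwa [P.R_one'] at this
    have hC12 : P.C 1 ≠ P.C 2 := hnb 1 le_rfl (by omega)
    have hC23 : P.C 2 ≠ P.C 3 := hnb 2 (by omega) (by omega)
    have hR2 : ∀ i, P.R 2 i = if P.C 1 = i then P.V 1 else P.I i := by
      intro i
      rw [show (2 : ℕ) = 1 + 1 from rfl, P.R_succ' 1 le_rfl, P.R_one']
    have hR3 : ∀ i, P.R 3 i = if P.C 2 = i then P.V 2 else P.R 2 i := by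
      intro i
      rw [show (3 : ℕ) = 2 + 1 from rfl, P.R_succ' 2 (by omega)]
    have hR4 : ∀ i, P.R 4 i = if P.C 3 = i then P.V 3 else P.R 3 i := by
      intro i
      rw [show (4 : ℕ) = 3 + 1 from rfl, P.R_succ' 3 (by omega)]
    -- V 1 = true
    have hV1 : P.V 1 = true := by
      by_contra hV1
      rw [Bool.not_eq_true] at hV1
      refine hmono 2 (by omega) (by omega) ⟨false, fun i => ?_⟩
      rw [hR2]
      split <;> simp [hV1, hI]
    -- V 3 = false
    have hV3 : P.V 3 = false := by
      have := h4 (P.C 3)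
      rwa [hR4, if_pos rfl] at this
    -- V 2 = false
    have hV2 : P.V 2 = false := by
      have := h4 (P.C 2)
      rwa [hR4, if_neg (fun h => hC23 h.symm), hR3, if_pos rfl] at this
    -- C 1 = C 3
    have hC13 : P.C 1 = P.C 3 := by
      by_contra hC13
      have := h4 (P.C 1)
      rw [hR4, if_neg (fun h => hC13 h.symm), hR3, if_neg (fun h => hC12 h.symm), hR2, if_pos rfl, hV1] at this
      exact Bool.noConfusion this
    -- build the permutation
    set σ : Equiv.Perm (Fin (n + 1)) := Equiv.swap 0 (P.C 1) with hσ
    have hσ1 : σ (P.C 1) = 0 := Equiv.swap_apply_right _ _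
    set c : Fin (n + 1) := σ (P.C 2) with hc
    have hc0 : c ≠ 0 := by
      intro h
      have h2 : σ (P.C 2) = 0 := by rw [← hc, h]
      exact hC12 (σ.injective (hσ1.trans h2.symm))
    set τ : Equiv.Perm (Fin (n + 1)) := Equiv.swap 1 c with hτ
    have hτ0 : τ 0 = 0 := Equiv.swap_apply_of_ne_of_ne h01 (fun h => hc0 h.symm)
    have hτc : τ c = 1 := Equiv.swap_apply_right _ _
    refine ⟨σ.trans τ, ?_, ?_, ?_, hV1, hV2, hV3⟩
    · show τ (σ (P.C 1)) = 0; rw [hσ1, hτ0]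
    · show τ (σ (P.C 2)) = 1; rw [← hc, hτc]
    · show τ (σ (P.C 3)) = 0; rw [← hC13, hσ1, hτ0]
  · -- the concrete atomic 2-path
    set P : SPath n := ⟨fun _ => false, fun _ => 0, fun _ => false⟩ with hP
    refine ⟨fun i hi hi' => by omega, ⟨1, rfl⟩, le_rfl, ?_, ?_, ?_⟩
    · intro i; rw [P.R_one']
    · intro i
      rw [show (2 : ℕ) = 1 + 1 from rfl, P.R_succ' 1 le_rfl, P.R_one']
      split <;> rfl
    · intro j hj hj'; omega
  · -- the concrete atomic 4-path
    set P : SPath n := ⟨fun _ => false, fun m => if m = 2 then 1 else 0,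
      fun m => if m = 1 then true else false⟩ with hP
    have hC1 : P.C 1 = 0 := rfl
    have hC2 : P.C 2 = 1 := rfl
    have hC3 : P.C 3 = 0 := rfl
    have hV1 : P.V 1 = true := rfl
    have hV2 : P.V 2 = false := rfl
    have hV3 : P.V 3 = false := rfl
    have hR2 : ∀ i, P.R 2 i = if (0 : Fin (n + 1)) = i then true else false := by
      intro i
      rw [show (2 : ℕ) = 1 + 1 from rfl, P.R_succ' 1 le_rfl, P.R_one', hC1, hV1]
    have hR3 : ∀ i, P.R 3 i = if (1 : Fin (n + 1)) = i then false else P.R 2 i := by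
      intro i
      rw [show (3 : ℕ) = 2 + 1 from rfl, P.R_succ' 2 (by omega), hC2, hV2]
    have hR4 : ∀ i, P.R 4 i = if (0 : Fin (n + 1)) = i then false else P.R 3 i := by
      intro i
      rw [show (4 : ℕ) = 3 + 1 from rfl, P.R_succ' 3 (by omega), hC3, hV3]
    refine ⟨?_, ⟨2, rfl⟩, by omega, ?_, ?_, ?_⟩
    · intro i hi hi'
      have hi2 : i ≤ 2 := by omega
      interval_cases i
      · rw [hC1, hC2]; exact h01
      · rw [hC2, hC3]; exact fun h => h01 h.symm
    · intro i; rw [P.R_one']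
    · intro i
      rw [hR4, hR3, hR2]
      by_cases h0 : (0 : Fin (n + 1)) = i
      · rw [if_pos h0]
      · rw [if_neg h0]
        by_cases h1 : (1 : Fin (n + 1)) = i
        · rw [if_pos h1]
        · rw [if_neg h1, if_neg h0]
    · intro j hj hj'
      rintro ⟨b, hb⟩
      interval_cases j
      · have hb0 := hb 0
        have hb1 := hb 1
        rw [hR2, if_pos rfl] at hb0
        rw [hR2, if_neg h01] at hb1
        exact Bool.noConfusion (hb0.trans hb1.symm)
      · have hb0 := hb 0
        have hb1 := hb 1
        rw [hR3, if_neg (fun h => h01 h.symm), hR2, if_pos rfl] at hb0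
        rw [hR3, if_pos rfl] at hb1
        exact Bool.noConfusion (hb0.trans hb1.symm)
end
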